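/- In a sequential effect algebra, a Boolean idempotent is central: if p is idempotent and every element below p is idempotent, then p commutes with every element of the algebra. -/
import Mathlib


universe u

/-- `EAle orth add a b` : the effect-algebra order `a ≤ b` iff `∃ c, a ⊕ c = b`. -/
def EAle {α : Type u} (orth : α → α → Prop) (add : α → α → α) (a b : α) : Prop :=
  ∃ c, orth a c ∧ add a c = b

/-- An effect algebra: partial sum `add` (defined when `orth` holds), zero, complement. -/
structure EffectAlgebra (α : Type u) where
  orth : α → α → Prop
  add : α → α → α
  zero : α
  compl : α → α
  orth_comm : ∀ a b, orth a b → orth b a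
  add_comm' : ∀ a b, orth a b → add a b = add b a
  orth_zero : ∀ a, orth a zero
  add_zero' : ∀ a, add a zero = a
  orth_assoc₁ : ∀ a b c, orth a b → orth (add a b) c → orth b c
  orth_assoc₂ : ∀ a b c, orth a b → orth (add a b) c → orth a (add b c)
  add_assoc' : ∀ a b c, orth a b → orth (add a b) c → add (add a b) c = add a (add b c)
  orth_compl : ∀ a, orth a (compl a)
  add_compl : ∀ a, add a (compl a) = compl zero
  compl_unique : ∀ a b, orth a b → add a b = compl zero → b = compl a
  orth_one : ∀ a, orth a (compl zero) → a = zero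

namespace EffectAlgebra
variable {α : Type u}
/-- The effect-algebra order. -/
def le (E : EffectAlgebra α) : α → α → Prop := EAle E.orth E.add
/-- The unit `1 := 0⊥`. -/
def one (E : EffectAlgebra α) : α := E.compl E.zero
end EffectAlgebra

/-- A sequential effect algebra: an effect algebra with a total product `seq`
satisfying S1–S5. -/
structure SEA (α : Type u) extends EffectAlgebra α where
  seq : α → α → α
  seq_orth : ∀ a b c, orth b c → orth (seq a b) (seq a c)                                -- S1
  seq_add : ∀ a b c, orth b c → seq a (add b c) = add (seq a b) (seq a c)                -- S1
  one_seq : ∀ a, seq (compl zero) a = a                                                  -- S2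
  seq_zero_symm : ∀ a b, seq a b = zero → seq b a = zero                                 -- S3
  comm_compl : ∀ a b, seq a b = seq b a → seq a (compl b) = seq (compl b) a              -- S4
  comm_assoc : ∀ a b c, seq a b = seq b a → seq a (seq b c) = seq (seq a b) c            -- S4
  comm_seq : ∀ a b c, seq c a = seq a c → seq c b = seq b c →
    seq c (seq a b) = seq (seq a b) c                                                    -- S5
  comm_add : ∀ a b c, seq c a = seq a c → seq c b = seq b c → orth a b →
    seq c (add a b) = seq (add a b) c                                                    -- S5

namespace SEAAux

variable {α : Type u} (E : SEA α)

lemma compl_compl (a : α) : E.compl (E.compl a) = a := by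
  have h1 : E.orth (E.compl a) a := E.orth_comm _ _ (E.orth_compl a)
  have h2 : E.add (E.compl a) a = E.compl E.zero := by
    rw [E.add_comm' _ _ h1]; exact E.add_compl a
  exact (E.compl_unique _ _ h1 h2).symm

lemma cancel (a b c : α) (hab : E.orth a b) (hac : E.orth a c)
    (h : E.add a b = E.add a c) : b = c := by
  set e := E.compl (E.add a b) with he
  have h1 : E.orth (E.add a b) e := E.orth_compl _
  have h2 : E.add (E.add a b) e = E.compl E.zero := E.add_compl _
  -- generic step: for any x with orth a x and add a x = add a b, x = compl (add a e)
  have key : ∀ x, E.orth a x → E.add a x = E.add a b → x = E.compl (E.add a e) := by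
    intro x hax hx
    have hxa : E.orth x a := E.orth_comm _ _ hax
    have hxae : E.orth (E.add x a) e := by
      rw [E.add_comm' _ _ hxa, hx]; exact h1
    have hae : E.orth a e := E.orth_assoc₁ x a e hxa hxae
    have hx_ae : E.orth x (E.add a e) := E.orth_assoc₂ x a e hxa hxae
    have hsum : E.add x (E.add a e) = E.compl E.zero := by
      rw [← E.add_assoc' x a e hxa hxae, E.add_comm' _ _ hxa, hx]
      exact h2
    have := E.compl_unique x (E.add a e) hx_ae hsum
    calc x = E.compl (E.compl x) := (compl_compl E x).symm
      _ = E.compl (E.add a e) := by rw [← this]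
  have hb' := key b hab rfl
  have hc' := key c hac h.symm
  rw [hb', hc']

lemma le_refl (a : α) : E.le a a := ⟨E.zero, E.orth_zero a, E.add_zero' a⟩

lemma le_zero (x : α) (h : E.le x E.zero) : x = E.zero := by
  obtain ⟨c, h1, h2⟩ := h
  have h01 : E.orth E.zero (E.compl E.zero) := E.orth_compl _
  have h3 : E.orth (E.add x c) (E.compl E.zero) := by rw [h2]; exact h01
  have hc1 : E.orth c (E.compl E.zero) := E.orth_assoc₁ x c _ h1 h3
  have hc0 : c = E.zero := E.orth_one c hc1
  rw [hc0, E.add_zero'] at h2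
  exact h2

lemma le_trans (a b c : α) (h1 : E.le a b) (h2 : E.le b c) : E.le a c := by
  obtain ⟨x, hx1, hx2⟩ := h1
  obtain ⟨y, hy1, hy2⟩ := h2
  have h3 : E.orth (E.add a x) y := by rw [hx2]; exact hy1
  refine ⟨E.add x y, E.orth_assoc₂ a x y hx1 h3, ?_⟩
  rw [← E.add_assoc' a x y hx1 h3, hx2, hy2]

lemma seq_zero_right (a : α) : E.seq a E.zero = E.zero := by
  have h00 : E.orth E.zero E.zero := E.orth_zero _
  have h : E.seq a (E.add E.zero E.zero) = E.add (E.seq a E.zero) (E.seq a E.zero) :=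
    E.seq_add a E.zero E.zero h00
  rw [E.add_zero'] at h
  have h2 : E.add (E.seq a E.zero) (E.seq a E.zero) = E.add (E.seq a E.zero) E.zero := by
    rw [E.add_zero']; exact h.symm
  exact cancel E _ _ _ (E.seq_orth a E.zero E.zero h00) (E.orth_zero _) h2

lemma seq_zero_left (a : α) : E.seq E.zero a = E.zero :=
  E.seq_zero_symm a E.zero (seq_zero_right E a)

lemma seq_one_right (a : α) : E.seq a (E.compl E.zero) = a := by
  have h : E.seq a E.zero = E.seq E.zero a := by
    rw [seq_zero_right, seq_zero_left]
  have := E.comm_compl a E.zero h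
  rw [this, E.one_seq]

lemma seq_add_compl (a b : α) :
    E.add (E.seq a b) (E.seq a (E.compl b)) = a := by
  have h := E.seq_add a b (E.compl b) (E.orth_compl b)
  rw [E.add_compl, seq_one_right] at h
  exact h.symm

lemma seq_orth_compl (a b : α) : E.orth (E.seq a b) (E.seq a (E.compl b)) :=
  E.seq_orth a b (E.compl b) (E.orth_compl b)

lemma le_mono (a b c : α) (h : E.le b c) : E.le (E.seq a b) (E.seq a c) := by
  obtain ⟨d, hd1, hd2⟩ := h
  refine ⟨E.seq a d, E.seq_orth a b d hd1, ?_⟩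
  rw [← E.seq_add a b d hd1, hd2]

lemma orth_le_compl (a b : α) (h : E.orth a b) : E.le a (E.compl b) := by
  have hba : E.orth b a := E.orth_comm _ _ h
  set e := E.compl (E.add b a) with he
  have h1 : E.orth (E.add b a) e := E.orth_compl _
  have h2 : E.add (E.add b a) e = E.compl E.zero := E.add_compl _
  have hae : E.orth a e := E.orth_assoc₁ b a e hba h1
  have hb_ae : E.orth b (E.add a e) := E.orth_assoc₂ b a e hba h1
  have hsum : E.add b (E.add a e) = E.compl E.zero := by
    rw [← E.add_assoc' b a e hba h1]; exact h2
  exact ⟨e, hae, E.compl_unique b (E.add a e) hb_ae hsum⟩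

lemma idem_seq_compl (p : α) (hp : E.seq p p = p) :
    E.seq p (E.compl p) = E.zero := by
  have h : E.add (E.seq p p) (E.seq p (E.compl p)) = p := seq_add_compl E p p
  rw [hp] at h
  have h2 : E.add p (E.seq p (E.compl p)) = E.add p E.zero := by
    rw [E.add_zero']; exact h
  have ho : E.orth p (E.seq p (E.compl p)) := by
    have := seq_orth_compl E p p; rwa [hp] at this
  exact cancel E p _ _ ho (E.orth_zero p) h2

lemma le_idem (p a : α) (hp : E.seq p p = p) (h : E.le a p) :
    E.seq p a = a ∧ E.seq a p = a := by
  have hc0 : E.seq (E.compl p) p = E.zero :=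
    E.seq_zero_symm p (E.compl p) (idem_seq_compl E p hp)
  have h1 : E.le (E.seq (E.compl p) a) (E.seq (E.compl p) p) := le_mono E _ a p h
  rw [hc0] at h1
  have h2 : E.seq (E.compl p) a = E.zero := le_zero E _ h1
  have h3 : E.seq a (E.compl p) = E.zero := E.seq_zero_symm _ _ h2
  have hcomm : E.seq a (E.compl p) = E.seq (E.compl p) a := by rw [h2, h3]
  have h4 := E.comm_compl a (E.compl p) hcomm
  rw [compl_compl] at h4
  have h5 : E.add (E.seq a p) (E.seq a (E.compl p)) = a := seq_add_compl E a p
  rw [h3, E.add_zero'] at h5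
  exact ⟨by rw [← h4, h5], h5⟩

lemma idem_le_comm (a b : α) (ha : E.seq a a = a) (h : E.le a b) :
    E.seq a b = a ∧ E.seq b a = a := by
  obtain ⟨d, hd1, hd2⟩ := h
  have hda : E.le d (E.compl a) := orth_le_compl E d a (E.orth_comm _ _ hd1)
  have h1 : E.le (E.seq a d) (E.seq a (E.compl a)) := le_mono E a d _ hda
  rw [idem_seq_compl E a ha] at h1
  have h2 : E.seq a d = E.zero := le_zero E _ h1
  have h3 : E.seq d a = E.zero := E.seq_zero_symm _ _ h2
  have hval : E.seq a b = a := by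
    rw [← hd2, E.seq_add a a d hd1, ha, h2, E.add_zero']
  have hcomm : E.seq a (E.add a d) = E.seq (E.add a d) a := by
    refine E.comm_add a d a rfl ?_ hd1
    rw [h2, h3]
  rw [hd2] at hcomm
  exact ⟨hval, by rw [← hcomm, hval]⟩

lemma orth_idem_seq (q a : α) (hq : E.seq q q = q) (h : E.orth a q) :
    E.seq q a = E.zero := by
  have h1 : E.le a (E.compl q) := orth_le_compl E a q h
  have h2 : E.le (E.seq q a) (E.seq q (E.compl q)) := le_mono E q a _ h1
  rw [idem_seq_compl E q hq] at h2
  exact le_zero E _ h2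

/-- Key lemma: for a Boolean idempotent `p`, `p ∘ b` commutes with `b`. -/
lemma key (p b : α) (hp : E.seq p p = p) (hB : ∀ a, E.le a p → E.seq a a = a) :
    E.seq (E.seq p b) b = E.seq b (E.seq p b) := by
  set s := E.seq p b with hs_def
  set t := E.seq p (E.compl b) with ht_def
  have hst : E.orth s t := seq_orth_compl E p b
  have hadd : E.add s t = p := seq_add_compl E p b
  have hsle : E.le s p := ⟨t, hst, hadd⟩
  have htle : E.le t p := ⟨s, E.orth_comm _ _ hst, by
    rw [E.add_comm' t s (E.orth_comm _ _ hst)]; exact hadd⟩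
  have hs : E.seq s s = s := hB s hsle
  have ht : E.seq t t = t := hB t htle
  have hts0 : E.seq t s = E.zero := orth_idem_seq E t s ht hst
  set w := E.seq s (E.compl b) with hw_def
  have hw_le_s : E.le w s := ⟨E.seq s b,
    E.orth_comm _ _ (seq_orth_compl E s b), by
      rw [E.add_comm' _ _ (E.orth_comm _ _ (seq_orth_compl E s b))]
      exact seq_add_compl E s b⟩
  have hw_le_p : E.le w p := le_trans E w s p hw_le_s hsle
  have hww : E.seq w w = w := hB w hw_le_p
  obtain ⟨hsw, hws⟩ := le_idem E s w hs hw_le_s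
  -- w = w ∘ b⊥
  have hwbc : E.seq w (E.compl b) = w := by
    have hcomm : E.seq w s = E.seq s w := by rw [hsw, hws]
    have h1 := E.comm_assoc w s (E.compl b) hcomm
    rw [← hw_def, hww, hws] at h1
    exact h1.symm
  -- w ∘ b = 0
  have hwb0 : E.seq w b = E.zero := by
    have h1 : E.add (E.seq w b) (E.seq w (E.compl b)) = w := seq_add_compl E w b
    rw [hwbc] at h1
    have ho : E.orth w (E.seq w b) := by
      have := seq_orth_compl E w b
      rw [hwbc] at this
      exact E.orth_comm _ _ this
    have h2 : E.add w (E.seq w b) = E.add w E.zero := by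
      rw [E.add_zero', E.add_comm' w _ ho]
      exact h1
    exact cancel E w _ _ ho (E.orth_zero w) h2
  have hbw0 : E.seq b w = E.zero := E.seq_zero_symm _ _ hwb0
  have hwbcomm : E.seq w b = E.seq b w := by rw [hwb0, hbw0]
  have hwbc_comm : E.seq w (E.compl b) = E.seq (E.compl b) w :=
    E.comm_compl w b hwbcomm
  obtain ⟨hpw, hwp⟩ := le_idem E p w hp hw_le_p
  have hwp_comm : E.seq w p = E.seq p w := by rw [hwp, hpw]
  -- w ∘ t = w
  have hwt : E.seq w t = w := by
    have h1 := E.comm_assoc w p (E.compl b) hwp_comm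
    rw [← ht_def, hwp, hwbc] at h1
    exact h1
  -- w commutes with t
  have hwt_comm : E.seq w t = E.seq t w :=
    E.comm_seq p (E.compl b) w hwp_comm hwbc_comm
  have htw : E.seq t w = w := by rw [← hwt_comm, hwt]
  -- w = 0
  have hw0 : w = E.zero := by
    have h1 : E.le (E.seq t w) (E.seq t s) := le_mono E t w s hw_le_s
    rw [htw, hts0] at h1
    exact le_zero E w h1
  -- conclude s commutes with b
  have hsbc0 : E.seq s (E.compl b) = E.zero := by rw [← hw_def, hw0]
  have hbcs0 : E.seq (E.compl b) s = E.zero := E.seq_zero_symm _ _ hsbc0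
  have hcomm : E.seq s (E.compl b) = E.seq (E.compl b) s := by rw [hsbc0, hbcs0]
  have h4 := E.comm_compl s (E.compl b) hcomm
  rw [compl_compl] at h4
  exact h4

end SEAAux

/-- A Boolean idempotent (an idempotent all of whose lower bounds are
idempotent) is central. -/
theorem sea_boolean_idem_central {α : Type u} (E : SEA α) (p : α)
    (hp : E.seq p p = p) (hb : ∀ a, E.le a p → E.seq a a = a) :
    ∀ b, E.seq p b = E.seq b p := by
  intro b
  have h1 := SEAAux.key E p b hp hb
  have h2 := SEAAux.key E p (E.compl b) hp hb
  have h3 := E.comm_compl (E.seq p (E.compl b)) (E.compl b) h2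
  rw [SEAAux.compl_compl] at h3
  have hst : E.orth (E.seq p b) (E.seq p (E.compl b)) := SEAAux.seq_orth_compl E p b
  have h4 := E.comm_add (E.seq p b) (E.seq p (E.compl b)) b h1.symm h3.symm hst
  rw [SEAAux.seq_add_compl E p b] at h4
  exact h4.symm
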